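/- Let (Ω, F, ℙ) be a probability space, T ≥ 1 a natural number, and p_1,…,p_T, e_1,…,e_T : Ω → ℝ measurable functions such that almost surely p_j ∈ [0,1] and p_j + e_j ∈ [0,1] for every j, and suppose E[|e_j|] ≤ η_j for constants η_j ≥ 0. Then E[Σ_{t=1}^T ∏_{j=1}^t (p_j + e_j)] ≤ E[Σ_{t=1}^T ∏_{j=1}^t p_j] + Γ, where the total bias is Γ := Σ_{k=1}^T (T − k + 1)·η_k. -/
import Mathlib
open MeasureTheory

lemma prod_le_prod_add_sum {ι : Type*} (s : Finset ι) (a b : ι → ℝ) :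
    (∀ i ∈ s, a i ∈ Set.Icc (0:ℝ) 1) → (∀ i ∈ s, b i ∈ Set.Icc (0:ℝ) 1) →
    ∏ i ∈ s, a i ≤ (∏ i ∈ s, b i) + ∑ i ∈ s, |a i - b i| := by
  classical
  induction s using Finset.induction_on with
  | empty => simp
  | @insert i s hi ih =>
    intro ha hb
    rw [Finset.prod_insert hi, Finset.prod_insert hi, Finset.sum_insert hi]
    have h1 := ih (fun j hj => ha j (Finset.mem_insert_of_mem hj))
      (fun j hj => hb j (Finset.mem_insert_of_mem hj))
    have hPa0 : (0:ℝ) ≤ ∏ j ∈ s, a j :=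
      Finset.prod_nonneg fun j hj => (ha j (Finset.mem_insert_of_mem hj)).1
    have hPa1 : ∏ j ∈ s, a j ≤ 1 :=
      Finset.prod_le_one (fun j hj => (ha j (Finset.mem_insert_of_mem hj)).1)
        (fun j hj => (ha j (Finset.mem_insert_of_mem hj)).2)
    have hS : (0:ℝ) ≤ ∑ j ∈ s, |a j - b j| :=
      Finset.sum_nonneg fun j _ => abs_nonneg _
    have hai := ha i (Finset.mem_insert_self i s)
    have hbi := hb i (Finset.mem_insert_self i s)
    have hd1 : a i - b i ≤ |a i - b i| := le_abs_self _
    have hd2 : -(a i - b i) ≤ |a i - b i| := neg_le_abs _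
    obtain ⟨hb0, hb1⟩ := hbi
    obtain ⟨ha0, ha1⟩ := hai
    nlinarith [mul_nonneg hb0 hS, mul_nonneg (sub_nonneg.2 hb1) hS,
      mul_nonneg hPa0 (sub_nonneg.2 hb1)]

/-- Expected budget under bounded estimation errors: if almost surely
`p_j ∈ [0,1]` and `p_j + e_j ∈ [0,1]` for every `j`, and `E[|e_j|] ≤ η_j` with
`η_j ≥ 0`, then
`E[Σ_{t=1}^T ∏_{j=1}^t (p_j + e_j)] ≤ E[Σ_{t=1}^T ∏_{j=1}^t p_j] + Γ`,
where `Γ = Σ_{k=1}^T (T − k + 1)·η_k`. -/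
theorem budget_estimation_error_bound
    {Ω : Type*} [MeasurableSpace Ω] (μ : Measure Ω) [IsProbabilityMeasure μ]
    (T : ℕ) (hT : 1 ≤ T) (p e : ℕ → Ω → ℝ) (η : ℕ → ℝ)
    (hpm : ∀ j, Measurable (p j)) (hem : ∀ j, Measurable (e j))
    (hp01 : ∀ j, ∀ᵐ ω ∂μ, p j ω ∈ Set.Icc (0 : ℝ) 1)
    (hpe01 : ∀ j, ∀ᵐ ω ∂μ, p j ω + e j ω ∈ Set.Icc (0 : ℝ) 1)
    (hη : ∀ j, 0 ≤ η j)
    (herr : ∀ j, ∫ ω, |e j ω| ∂μ ≤ η j) :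
    (∫ ω, ∑ t ∈ Finset.Icc 1 T, ∏ j ∈ Finset.Icc 1 t, (p j ω + e j ω) ∂μ) ≤
      (∫ ω, ∑ t ∈ Finset.Icc 1 T, ∏ j ∈ Finset.Icc 1 t, p j ω ∂μ) +
        ∑ k ∈ Finset.Icc 1 T, ((T - k + 1 : ℕ) : ℝ) * η k := by
  have hp_ae : ∀ᵐ ω ∂μ, ∀ j, p j ω ∈ Set.Icc (0:ℝ) 1 := ae_all_iff.2 hp01
  have hpe_ae : ∀ᵐ ω ∂μ, ∀ j, p j ω + e j ω ∈ Set.Icc (0:ℝ) 1 := ae_all_iff.2 hpe01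
  -- integrability of |e j|
  have he_int : ∀ j, Integrable (fun ω => |e j ω|) μ := by
    intro j
    refine Integrable.mono' (integrable_const (2:ℝ))
      ((hem j).abs.aestronglyMeasurable) ?_
    filter_upwards [hp01 j, hpe01 j] with ω h1 h2
    rw [Real.norm_eq_abs, abs_abs]
    exact abs_le.2 ⟨by linarith [h1.2, h2.1], by linarith [h1.1, h2.2]⟩
  set F := fun ω => ∑ t ∈ Finset.Icc 1 T, ∏ j ∈ Finset.Icc 1 t, (p j ω + e j ω)
  set G := fun ω => ∑ t ∈ Finset.Icc 1 T, ∏ j ∈ Finset.Icc 1 t, p j ω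
  set H := fun ω => ∑ t ∈ Finset.Icc 1 T, ∑ j ∈ Finset.Icc 1 t, |e j ω|
  have hFm : Measurable F := by
    apply Finset.measurable_sum
    intro t _
    exact Finset.measurable_prod _ (fun j _ => (hpm j).add (hem j))
  have hGm : Measurable G := by
    apply Finset.measurable_sum
    intro t _
    exact Finset.measurable_prod _ (fun j _ => hpm j)
  have hF_int : Integrable F μ := by
    refine Integrable.mono' (integrable_const (T:ℝ)) hFm.aestronglyMeasurable ?_
    filter_upwards [hpe_ae] with ω h
    rw [Real.norm_eq_abs, abs_le]
    constructor
    · have : (0:ℝ) ≤ F ω :=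
        Finset.sum_nonneg fun t _ => Finset.prod_nonneg fun j _ => (h j).1
      have hT0 : (0:ℝ) ≤ (T:ℝ) := Nat.cast_nonneg _
      linarith
    · calc F ω ≤ ∑ t ∈ Finset.Icc 1 T, 1 := by
            apply Finset.sum_le_sum
            intro t _
            exact Finset.prod_le_one (fun j _ => (h j).1) (fun j _ => (h j).2)
        _ = ((Finset.Icc 1 T).card : ℝ) := by simp
        _ ≤ (T:ℝ) := by simp [Nat.card_Icc]
  have hG_int : Integrable G μ := by
    refine Integrable.mono' (integrable_const (T:ℝ)) hGm.aestronglyMeasurable ?_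
    filter_upwards [hp_ae] with ω h
    rw [Real.norm_eq_abs, abs_le]
    constructor
    · have : (0:ℝ) ≤ G ω :=
        Finset.sum_nonneg fun t _ => Finset.prod_nonneg fun j _ => (h j).1
      have hT0 : (0:ℝ) ≤ (T:ℝ) := Nat.cast_nonneg _
      linarith
    · calc G ω ≤ ∑ t ∈ Finset.Icc 1 T, 1 := by
            apply Finset.sum_le_sum
            intro t _
            exact Finset.prod_le_one (fun j _ => (h j).1) (fun j _ => (h j).2)
        _ = ((Finset.Icc 1 T).card : ℝ) := by simp
        _ ≤ (T:ℝ) := by simp [Nat.card_Icc]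
  have hH_int : Integrable H μ :=
    integrable_finset_sum _ fun t _ => integrable_finset_sum _ fun j _ => he_int j
  have key : ∀ᵐ ω ∂μ, F ω ≤ G ω + H ω := by
    filter_upwards [hp_ae, hpe_ae] with ω h1 h2
    have : F ω ≤ ∑ t ∈ Finset.Icc 1 T,
        ((∏ j ∈ Finset.Icc 1 t, p j ω) + ∑ j ∈ Finset.Icc 1 t, |e j ω|) := by
      apply Finset.sum_le_sum
      intro t _
      have := prod_le_prod_add_sum (Finset.Icc 1 t)
        (fun j => p j ω + e j ω) (fun j => p j ω)
        (fun j _ => h2 j) (fun j _ => h1 j)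
      simpa using this
    simpa [G, H, Finset.sum_add_distrib] using this
  have step1 : ∫ ω, F ω ∂μ ≤ ∫ ω, G ω + H ω ∂μ :=
    integral_mono_ae hF_int (hG_int.add hH_int) key
  rw [integral_add hG_int hH_int] at step1
  have step2 : ∫ ω, H ω ∂μ ≤ ∑ k ∈ Finset.Icc 1 T, ((T - k + 1 : ℕ) : ℝ) * η k := by
    have : ∫ ω, H ω ∂μ = ∑ t ∈ Finset.Icc 1 T, ∑ j ∈ Finset.Icc 1 t, ∫ ω, |e j ω| ∂μ := by
      rw [integral_finset_sum _ fun t _ => integrable_finset_sum _ fun j _ => he_int j]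
      exact Finset.sum_congr rfl fun t _ => integral_finset_sum _ fun j _ => he_int j
    rw [this]
    calc ∑ t ∈ Finset.Icc 1 T, ∑ j ∈ Finset.Icc 1 t, ∫ ω, |e j ω| ∂μ
        ≤ ∑ t ∈ Finset.Icc 1 T, ∑ j ∈ Finset.Icc 1 t, η j := by
          apply Finset.sum_le_sum; intro t _
          apply Finset.sum_le_sum; intro j _
          exact herr j
      _ = ∑ k ∈ Finset.Icc 1 T, ∑ t ∈ Finset.Icc k T, η k := by
          refine Finset.sum_comm' ?_
          intro t k
          simp only [Finset.mem_Icc]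
          omega
      _ = ∑ k ∈ Finset.Icc 1 T, ((T - k + 1 : ℕ) : ℝ) * η k := by
          apply Finset.sum_congr rfl
          intro k hk
          rw [Finset.sum_const, Nat.card_Icc, nsmul_eq_mul]
          congr 1
          norm_cast
          simp only [Finset.mem_Icc] at hk
          omega
  linarith
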